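/- arXiv:math/0603596 — 4 statements merged into one kernel-verified Lean document; each statement's English description precedes it below -/
import Mathlib

section
/- If a finite-dimensional real Lie algebra g admits an abelian generalized complex structure (for some closed 3-form H on g), then g is abelian, i.e. [X,Y] = 0 for all X, Y ∈ g. -/
set_option linter.unusedSectionVars false

open scoped TensorProduct

noncomputable section

namespace GKTest

variable {g : Type} [LieRing g] [LieAlgebra ℝ g]

/-- Auxiliary reindexing: `skip2 i j m` is the `m`-th element (0-indexed) of
`{0,…,k} \ {i,j}` when `i < j`. -/
def skip2 (i j m : ℕ) : ℕ := if m < i then m else if m + 1 < j then m + 1 else m + 2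

lemma skip2_le (i j m : ℕ) : skip2 i j m ≤ m + 2 := by
  unfold skip2; split_ifs <;> omega

/-- The argument list `(⁅X i, X j⁆, X₀, …, X̂ᵢ, …, X̂ⱼ, …, X_k)` used in the
Chevalley–Eilenberg formula. -/
def ceArg {k : ℕ} (X : Fin (k + 1) → g) (i j : Fin (k + 1)) : Fin k → g :=
  fun l =>
    if h : (l : ℕ) = 0 then ⁅X i, X j⁆
    else X ⟨skip2 (i : ℕ) (j : ℕ) ((l : ℕ) - 1), by
      have h1 := skip2_le (i : ℕ) (j : ℕ) ((l : ℕ) - 1)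
      have h2 := l.isLt
      omega⟩

/-- The Chevalley–Eilenberg differential of an alternating `k`-form, as a raw function:
`dα(X₀,…,X_k) = ∑_{i<j} (−1)^{i+j} α(⁅X_i,X_j⁆, X₀,…,X̂ᵢ,…,X̂ⱼ,…,X_k)`. -/
def ceD {k : ℕ} (α : g [⋀^Fin k]→ₗ[ℝ] ℝ) (X : Fin (k + 1) → g) : ℝ :=
  ∑ i : Fin (k + 1), ∑ j : Fin (k + 1),
    if (i : ℕ) < (j : ℕ) then (-1 : ℝ) ^ ((i : ℕ) + (j : ℕ)) * α (ceArg X i j) else 0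

lemma upd0 (X Y Z W : g) : Function.update ![X, Y, Z] 0 W = ![W, Y, Z] := by
  funext l; fin_cases l <;> simp [Function.update]

lemma upd1 (X Y Z W : g) : Function.update ![X, Y, Z] 1 W = ![X, W, Z] := by
  funext l; fin_cases l <;> simp [Function.update]

lemma upd2 (X Y Z W : g) : Function.update ![X, Y, Z] 2 W = ![X, Y, W] := by
  funext l; fin_cases l <;> simp [Function.update]

variable (H : g [⋀^Fin 3]→ₗ[ℝ] ℝ)

lemma H_add2 (X Y : g) (a b : g) :
    H ![X, Y, a + b] = H ![X, Y, a] + H ![X, Y, b] := by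
  have h := H.toMultilinearMap.map_update_add ![X, Y, a] 2 a b
  simpa [upd2] using h

lemma H_smul2 (X Y : g) (c : ℝ) (a : g) :
    H ![X, Y, c • a] = c * H ![X, Y, a] := by
  have h := H.toMultilinearMap.map_update_smul ![X, Y, a] 2 c a
  simpa [upd2, smul_eq_mul] using h

lemma H_add0 (X X' Y Z : g) :
    H ![X + X', Y, Z] = H ![X, Y, Z] + H ![X', Y, Z] := by
  have h := H.toMultilinearMap.map_update_add ![X, Y, Z] 0 X X'
  simpa [upd0] using h

lemma H_smul0 (c : ℝ) (X Y Z : g) :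
    H ![c • X, Y, Z] = c * H ![X, Y, Z] := by
  have h := H.toMultilinearMap.map_update_smul ![X, Y, Z] 0 c X
  simpa [upd0, smul_eq_mul] using h

lemma H_add1 (X Y Y' Z : g) :
    H ![X, Y + Y', Z] = H ![X, Y, Z] + H ![X, Y', Z] := by
  have h := H.toMultilinearMap.map_update_add ![X, Y, Z] 1 Y Y'
  simpa [upd1] using h

lemma H_smul1 (c : ℝ) (X Y Z : g) :
    H ![X, c • Y, Z] = c * H ![X, Y, Z] := by
  have h := H.toMultilinearMap.map_update_smul ![X, Y, Z] 1 c Y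
  simpa [upd1, smul_eq_mul] using h

/-- The contraction `ι_Y ι_X H = H(X, Y, ·)` as a linear functional. -/
def hContr (X Y : g) : Module.Dual ℝ g where
  toFun Z := H ![X, Y, Z]
  map_add' a b := H_add2 H X Y a b
  map_smul' c a := by simpa using H_smul2 H X Y c a

@[simp] lemma hContr_apply (X Y Z : g) : hContr H X Y Z = H ![X, Y, Z] := rfl

/-- The dual (second) component of the Courant bracket:
`ad*_X η − ad*_Y ξ + H(X,Y,·)` where `(ad*_X η)(Z) = −η(⁅X,Z⁆)`. -/
def courantDual (a b : g × Module.Dual ℝ g) : Module.Dual ℝ g :=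
  -(b.2 ∘ₗ (LieAlgebra.ad ℝ g a.1 : g →ₗ[ℝ] g)) +
    a.2 ∘ₗ (LieAlgebra.ad ℝ g b.1 : g →ₗ[ℝ] g) + hContr H a.1 b.1

@[simp] lemma courantDual_apply (a b : g × Module.Dual ℝ g) (Z : g) :
    courantDual H a b Z = -(b.2 ⁅a.1, Z⁆) + a.2 ⁅b.1, Z⁆ + H ![a.1, b.1, Z] := by
  simp [courantDual]

/-- The Courant bracket on `g ⊕ g*` (with background closed 3-form `H`), as a bilinear map:
`⟦(X,ξ),(Y,η)⟧ = (⁅X,Y⁆, ad*_X η − ad*_Y ξ + H(X,Y,·))`. -/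
def courant : (g × Module.Dual ℝ g) →ₗ[ℝ] (g × Module.Dual ℝ g) →ₗ[ℝ] (g × Module.Dual ℝ g) :=
  LinearMap.mk₂ ℝ (fun a b => (⁅a.1, b.1⁆, courantDual H a b))
    (fun a a' b => by
      refine Prod.ext (by simp [add_lie]) ?_
      ext Z
      simp [courantDual_apply, add_lie, H_add0, map_add]
      ring)
    (fun c a b => by
      refine Prod.ext (by simp [smul_lie]) ?_
      ext Z
      simp [courantDual_apply, smul_lie, H_smul0, map_smul, smul_eq_mul]
      ring)
    (fun a b b' => by
      refine Prod.ext (by simp [lie_add]) ?_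
      ext Z
      simp [courantDual_apply, lie_add, H_add1, map_add]
      ring)
    (fun c a b => by
      refine Prod.ext (by simp [lie_smul]) ?_
      ext Z
      simp [courantDual_apply, lie_smul, H_smul1, map_smul, smul_eq_mul]
      ring)

@[simp] lemma courant_apply (a b : g × Module.Dual ℝ g) :
    courant H a b = (⁅a.1, b.1⁆, courantDual H a b) := rfl

/-- The natural pairing `⟨(X,ξ),(Y,η)⟩ = ½(η(X) + ξ(Y))` on `g ⊕ g*`. -/
def npair {V : Type} [AddCommGroup V] [Module ℝ V]
    (a b : V × Module.Dual ℝ V) : ℝ :=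
  (b.2 a.1 + a.2 b.1) / 2

/-- The `ℂ`-bilinear extension of an `ℝ`-bilinear map to the complexification. -/
def cxBil {M : Type} [AddCommGroup M] [Module ℝ M]
    (B : M →ₗ[ℝ] M →ₗ[ℝ] M) : (ℂ ⊗[ℝ] M) →ₗ[ℂ] (ℂ ⊗[ℝ] M) →ₗ[ℂ] (ℂ ⊗[ℝ] M) :=
  TensorProduct.curry (((TensorProduct.lift B).baseChange ℂ) ∘ₗ
    (TensorProduct.AlgebraTensorModule.distribBaseChange ℝ ℂ M M).symm.toLinearMap)

/-- The `i`-eigenspace of the `ℂ`-linear extension of `J` in the complexification. -/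
def eigI {M : Type} [AddCommGroup M] [Module ℝ M] (J : M →ₗ[ℝ] M) :
    Submodule ℂ (ℂ ⊗[ℝ] M) :=
  Module.End.eigenspace (J.baseChange ℂ) Complex.I

/-- The `(−i)`-eigenspace (i.e. the complex conjugate of the `i`-eigenspace). -/
def eigIbar {M : Type} [AddCommGroup M] [Module ℝ M] (J : M →ₗ[ℝ] M) :
    Submodule ℂ (ℂ ⊗[ℝ] M) :=
  Module.End.eigenspace (J.baseChange ℂ) (-Complex.I)

/-- A generalized complex structure on a Lie algebra `g` with closed 3-form `H`:
an `ℝ`-linear `J` on `g ⊕ g*` with `J² = −id`, preserving the natural pairing, whose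
`i`-eigenspace in the complexification is closed under the (complexified) Courant bracket. -/
def IsGCS (J : (g × Module.Dual ℝ g) →ₗ[ℝ] (g × Module.Dual ℝ g)) : Prop :=
  (∀ v, J (J v) = -v) ∧
  (∀ u v, npair (J u) (J v) = npair u v) ∧
  (∀ u ∈ eigI J, ∀ v ∈ eigI J, cxBil (courant H) u v ∈ eigI J)

end GKTest

namespace GKTest

/-- An *abelian* generalized complex structure: the Courant bracket (extended
`ℂ`-bilinearly) vanishes identically on the `i`-eigenspace `L`. -/
def IsAbelianGCS {g : Type} [LieRing g] [LieAlgebra ℝ g] (H : g [⋀^Fin 3]→ₗ[ℝ] ℝ)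
    (J : (g × Module.Dual ℝ g) →ₗ[ℝ] (g × Module.Dual ℝ g)) : Prop :=
  IsGCS H J ∧ ∀ u ∈ eigI J, ∀ v ∈ eigI J, cxBil (courant H) u v = 0


section Aux
variable {g : Type} [LieRing g] [LieAlgebra ℝ g]

/-- npair as a bilinear map -/
def npBil {V : Type} [AddCommGroup V] [Module ℝ V] :
    (V × Module.Dual ℝ V) →ₗ[ℝ] (V × Module.Dual ℝ V) →ₗ[ℝ] ℝ :=
  LinearMap.mk₂ ℝ npair
    (fun a a' b => by simp [npair, map_add]; ring)
    (fun c a b => by simp [npair, map_smul, smul_eq_mul]; ring)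
    (fun a b b' => by simp [npair, map_add]; ring)
    (fun c a b => by simp [npair, map_smul, smul_eq_mul]; ring)

@[simp] lemma npBil_apply {V : Type} [AddCommGroup V] [Module ℝ V]
    (a b : V × Module.Dual ℝ V) : npBil a b = npair a b := rfl

lemma npair_nondeg {V : Type} [AddCommGroup V] [Module ℝ V]
    (a : V × Module.Dual ℝ V) (h : ∀ b, npair a b = 0) : a = 0 := by
  have h1 : a.2 = 0 := by
    ext Y
    have := h (Y, 0)
    simp [npair] at this
    simpa using this
  have h2 : a.1 = 0 := by
    rw [← Module.forall_dual_apply_eq_zero_iff ℝ a.1]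
    intro φ
    have := h (0, φ)
    simp [npair] at this
    simpa using this
  exact Prod.ext h2 h1

/-- key tmul formula for cxBil -/
lemma cxBil_tmul {M : Type} [AddCommGroup M] [Module ℝ M]
    (B : M →ₗ[ℝ] M →ₗ[ℝ] M) (c d : ℂ) (a b : M) :
    cxBil B (c ⊗ₜ[ℝ] a) (d ⊗ₜ[ℝ] b) = (c * d) ⊗ₜ[ℝ] (B a b) := by
  simp [cxBil, TensorProduct.AlgebraTensorModule.distribBaseChange,
    TensorProduct.smul_tmul', smul_eq_mul, mul_comm]

end Aux


section Aux2
variable {g : Type} [LieRing g] [LieAlgebra ℝ g]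

/-- the complexified pairing -/
def pairC {M : Type} [AddCommGroup M] [Module ℝ M]
    (P : M →ₗ[ℝ] M →ₗ[ℝ] ℝ) : (ℂ ⊗[ℝ] M) →ₗ[ℂ] (ℂ ⊗[ℝ] M) →ₗ[ℂ] ℂ :=
  TensorProduct.curry ((TensorProduct.AlgebraTensorModule.rid ℝ ℂ ℂ).toLinearMap ∘ₗ
    ((TensorProduct.lift P).baseChange ℂ) ∘ₗ
    (TensorProduct.AlgebraTensorModule.distribBaseChange ℝ ℂ M M).symm.toLinearMap)

lemma pairC_tmul {M : Type} [AddCommGroup M] [Module ℝ M]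
    (P : M →ₗ[ℝ] M →ₗ[ℝ] ℝ) (c d : ℂ) (a b : M) :
    pairC P (c ⊗ₜ[ℝ] a) (d ⊗ₜ[ℝ] b) = c * d * (P a b : ℂ) := by
  simp [pairC, TensorProduct.AlgebraTensorModule.distribBaseChange,
    TensorProduct.smul_tmul', smul_eq_mul, TensorProduct.AlgebraTensorModule.rid_tmul,
    Complex.real_smul]
  ring

/-- real part map -/
def reM (M : Type) [AddCommGroup M] [Module ℝ M] : (ℂ ⊗[ℝ] M) →ₗ[ℝ] M :=
  TensorProduct.lift ((LinearMap.lsmul ℝ M) ∘ₗ Complex.reLm)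

def imM (M : Type) [AddCommGroup M] [Module ℝ M] : (ℂ ⊗[ℝ] M) →ₗ[ℝ] M :=
  TensorProduct.lift ((LinearMap.lsmul ℝ M) ∘ₗ Complex.imLm)

@[simp] lemma reM_tmul {M : Type} [AddCommGroup M] [Module ℝ M] (c : ℂ) (m : M) :
    reM M (c ⊗ₜ[ℝ] m) = c.re • m := rfl

@[simp] lemma imM_tmul {M : Type} [AddCommGroup M] [Module ℝ M] (c : ℂ) (m : M) :
    imM M (c ⊗ₜ[ℝ] m) = c.im • m := rfl

lemma tensor_decomp {M : Type} [AddCommGroup M] [Module ℝ M] (w : ℂ ⊗[ℝ] M) :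
    w = (1 : ℂ) ⊗ₜ[ℝ] reM M w + Complex.I • ((1 : ℂ) ⊗ₜ[ℝ] imM M w) := by
  induction w using TensorProduct.induction_on with
  | zero => simp
  | tmul c m =>
      simp only [reM_tmul, imM_tmul, TensorProduct.tmul_smul]
      rw [TensorProduct.smul_tmul', TensorProduct.smul_tmul', TensorProduct.smul_tmul',
        ← TensorProduct.add_tmul]
      congr 1
      apply Complex.ext <;> simp
  | add x y hx hy =>
      rw [map_add, map_add, TensorProduct.tmul_add, TensorProduct.tmul_add, smul_add]
      conv_lhs => rw [hx, hy]
      abel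

lemma tmul_one_injective {M : Type} [AddCommGroup M] [Module ℝ M] (m : M)
    (h : (1 : ℂ) ⊗ₜ[ℝ] m = 0) : m = 0 := by
  have := congrArg (reM M) h
  simpa using this

end Aux2


section Aux3
variable {g : Type} [LieRing g] [LieAlgebra ℝ g]

/-- conjugation on the complexification -/
def conjM (M : Type) [AddCommGroup M] [Module ℝ M] :
    (ℂ ⊗[ℝ] M) →ₗ[ℝ] (ℂ ⊗[ℝ] M) :=
  TensorProduct.map Complex.conjAe.toLinearMap LinearMap.id

@[simp] lemma conjM_tmul {M : Type} [AddCommGroup M] [Module ℝ M] (c : ℂ) (m : M) :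
    conjM M (c ⊗ₜ[ℝ] m) = (starRingEnd ℂ c) ⊗ₜ[ℝ] m := rfl

lemma conjM_conjM {M : Type} [AddCommGroup M] [Module ℝ M] (w : ℂ ⊗[ℝ] M) :
    conjM M (conjM M w) = w := by
  induction w using TensorProduct.induction_on with
  | zero => simp
  | tmul c m => simp
  | add x y hx hy => rw [map_add, map_add, hx, hy]

lemma conjM_smul {M : Type} [AddCommGroup M] [Module ℝ M] (z : ℂ) (w : ℂ ⊗[ℝ] M) :
    conjM M (z • w) = (starRingEnd ℂ z) • conjM M w := by
  induction w using TensorProduct.induction_on with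
  | zero => simp
  | tmul c m => rw [TensorProduct.smul_tmul', conjM_tmul, conjM_tmul,
      TensorProduct.smul_tmul']; simp
  | add x y hx hy => rw [smul_add, map_add, hx, hy, map_add, smul_add]

lemma conjM_baseChange {M : Type} [AddCommGroup M] [Module ℝ M]
    (J : M →ₗ[ℝ] M) (w : ℂ ⊗[ℝ] M) :
    J.baseChange ℂ (conjM M w) = conjM M (J.baseChange ℂ w) := by
  induction w using TensorProduct.induction_on with
  | zero => simp
  | tmul c m => simp
  | add x y hx hy => rw [map_add, map_add, hx, hy, map_add, map_add]

lemma conjM_cxBil {M : Type} [AddCommGroup M] [Module ℝ M]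
    (B : M →ₗ[ℝ] M →ₗ[ℝ] M) (u v : ℂ ⊗[ℝ] M) :
    cxBil B (conjM M u) (conjM M v) = conjM M (cxBil B u v) := by
  induction u using TensorProduct.induction_on with
  | zero => simp
  | tmul c a =>
      induction v using TensorProduct.induction_on with
      | zero => simp
      | tmul d b => rw [conjM_tmul, conjM_tmul, cxBil_tmul, cxBil_tmul, ← map_mul, conjM_tmul]
      | add x y hx hy => simp only [map_add, LinearMap.add_apply, hx, hy]
  | add x y hx hy => simp only [map_add, LinearMap.add_apply, hx, hy]

lemma conjM_mem_eigIbar {M : Type} [AddCommGroup M] [Module ℝ M]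
    {J : M →ₗ[ℝ] M} {w : ℂ ⊗[ℝ] M} (h : w ∈ eigI J) : conjM M w ∈ eigIbar J := by
  rw [eigI, Module.End.mem_eigenspace_iff] at h
  rw [eigIbar, Module.End.mem_eigenspace_iff]
  rw [conjM_baseChange, h, conjM_smul]
  simp

lemma conjM_mem_eigI {M : Type} [AddCommGroup M] [Module ℝ M]
    {J : M →ₗ[ℝ] M} {w : ℂ ⊗[ℝ] M} (h : w ∈ eigIbar J) : conjM M w ∈ eigI J := by
  rw [eigIbar, Module.End.mem_eigenspace_iff] at h
  rw [eigI, Module.End.mem_eigenspace_iff]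
  rw [conjM_baseChange, h, conjM_smul]
  simp

lemma decompEig {M : Type} [AddCommGroup M] [Module ℝ M]
    {J : M →ₗ[ℝ] M} (hJ2 : ∀ v, J (J v) = -v) (w : ℂ ⊗[ℝ] M) :
    ∃ p ∈ eigI J, ∃ q ∈ eigIbar J, w = p + q := by
  have hsq : ∀ x : ℂ ⊗[ℝ] M, J.baseChange ℂ (J.baseChange ℂ x) = -x := by
    intro x
    induction x using TensorProduct.induction_on with
    | zero => simp
    | tmul c m => simp [hJ2, TensorProduct.tmul_neg]
    | add x y hx hy => rw [map_add, map_add, hx, hy, neg_add]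
  refine ⟨(1/2 : ℂ) • (w - Complex.I • J.baseChange ℂ w), ?_,
          (1/2 : ℂ) • (w + Complex.I • J.baseChange ℂ w), ?_, ?_⟩
  · rw [eigI, Module.End.mem_eigenspace_iff]
    rw [map_smul, map_sub, map_smul, hsq]
    match_scalars <;> simp [Complex.ext_iff]
  · rw [eigIbar, Module.End.mem_eigenspace_iff]
    rw [map_smul, map_add, map_smul, hsq]
    match_scalars <;> simp [Complex.ext_iff]
  · module

end Aux3


section Aux4
variable {g : Type} [LieRing g] [LieAlgebra ℝ g] (H : g [⋀^Fin 3]→ₗ[ℝ] ℝ)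

lemma H_swap01 (X Y Z : g) : H ![Y, X, Z] = -H ![X, Y, Z] := by
  have h := H.map_swap ![X, Y, Z] (show (0 : Fin 3) ≠ 1 by decide)
  have e : ![X, Y, Z] ∘ Equiv.swap (0 : Fin 3) 1 = ![Y, X, Z] := by
    funext l; fin_cases l <;> simp [Equiv.swap_apply_def]
  rw [e] at h; exact h

lemma H_swap12 (X Y Z : g) : H ![X, Z, Y] = -H ![X, Y, Z] := by
  have h := H.map_swap ![X, Y, Z] (show (1 : Fin 3) ≠ 2 by decide)
  have e : ![X, Y, Z] ∘ Equiv.swap (1 : Fin 3) 2 = ![X, Z, Y] := by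
    funext l; fin_cases l <;> simp [Equiv.swap_apply_def]
  rw [e] at h; exact h

lemma courant_antisym (a b : g × Module.Dual ℝ g) :
    courant H a b = - courant H b a := by
  refine Prod.ext ?_ ?_
  · show ⁅a.1, b.1⁆ = -⁅b.1, a.1⁆
    rw [← lie_skew]
  · show courantDual H a b = -(courantDual H b a)
    ext Z
    simp only [courantDual_apply, LinearMap.neg_apply]
    rw [H_swap01 H b.1 a.1 Z]
    ring

lemma courant_inv (a b c : g × Module.Dual ℝ g) :
    npair (courant H a b) c + npair b (courant H a c) = 0 := by
  simp only [npair, courant_apply, courantDual_apply]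
  rw [show ⁅c.1, b.1⁆ = -⁅b.1, c.1⁆ by rw [← lie_skew], map_neg,
    H_swap12 H a.1 b.1 c.1]
  ring

lemma cxBil_antisym (u v : ℂ ⊗[ℝ] (g × Module.Dual ℝ g)) :
    cxBil (courant H) u v = - cxBil (courant H) v u := by
  induction u using TensorProduct.induction_on with
  | zero => simp
  | tmul c a =>
      induction v using TensorProduct.induction_on with
      | zero => simp
      | tmul d b =>
          rw [cxBil_tmul, cxBil_tmul, courant_antisym H a b, TensorProduct.tmul_neg,
            mul_comm]
      | add x y hx hy => simp only [map_add, LinearMap.add_apply, hx, hy]; abel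
  | add x y hx hy => simp only [map_add, LinearMap.add_apply, hx, hy]; abel

lemma npair_smul_left {V : Type} [AddCommGroup V] [Module ℝ V]
    (r : ℝ) (a m : V × Module.Dual ℝ V) : npair (r • a) m = r * npair a m := by
  simp [npair, Prod.smul_fst, Prod.smul_snd, map_smul, smul_eq_mul]
  ring

lemma npair_add_left {V : Type} [AddCommGroup V] [Module ℝ V]
    (a b m : V × Module.Dual ℝ V) : npair (a + b) m = npair a m + npair b m := by
  simp [npair, map_add]
  ring

lemma cxBil_inv (u v w : ℂ ⊗[ℝ] (g × Module.Dual ℝ g)) :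
    pairC npBil (cxBil (courant H) u v) w + pairC npBil v (cxBil (courant H) u w) = 0 := by
  induction u using TensorProduct.induction_on with
  | zero => simp
  | tmul c a =>
      induction v using TensorProduct.induction_on with
      | zero => simp
      | tmul d b =>
          induction w using TensorProduct.induction_on with
          | zero => simp
          | tmul e x =>
              rw [cxBil_tmul, cxBil_tmul, pairC_tmul, pairC_tmul]
              have h : ((npair (courant H a b) x : ℝ) : ℂ) +
                  ((npair b (courant H a x) : ℝ) : ℂ) = 0 := by
                exact_mod_cast congrArg (fun t : ℝ => (t : ℂ)) (courant_inv H a b x)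
              simp only [npBil_apply]
              linear_combination c * d * e * h
          | add x y hx hy =>
              simp only [map_add, LinearMap.add_apply, hx, hy]
              linear_combination hx + hy
      | add x y hx hy =>
          simp only [map_add, LinearMap.add_apply]
          linear_combination hx + hy
  | add x y hx hy =>
      simp only [map_add, LinearMap.add_apply]
      linear_combination hx + hy

lemma pairC_one {V : Type} [AddCommGroup V] [Module ℝ V]
    (w : ℂ ⊗[ℝ] (V × Module.Dual ℝ V)) (m : V × Module.Dual ℝ V) :
    pairC npBil w ((1 : ℂ) ⊗ₜ[ℝ] m) =
      ((npair (reM _ w) m : ℝ) : ℂ) + ((npair (imM _ w) m : ℝ) : ℂ) * Complex.I := by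
  induction w using TensorProduct.induction_on with
  | zero => simp [npair]
  | tmul c a =>
      rw [pairC_tmul, reM_tmul, imM_tmul, npBil_apply, npair_smul_left, npair_smul_left]
      push_cast
      linear_combination (-((npair a m : ℝ) : ℂ)) * (Complex.re_add_im c)
  | add x y hx hy =>
      simp only [map_add, LinearMap.add_apply, hx, hy, npair_add_left]
      push_cast
      ring

lemma pairC_nondeg {V : Type} [AddCommGroup V] [Module ℝ V]
    (w : ℂ ⊗[ℝ] (V × Module.Dual ℝ V))
    (h : ∀ x, pairC npBil w x = 0) : w = 0 := by
  have key : ∀ m, npair (reM _ w) m = 0 ∧ npair (imM _ w) m = 0 := by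
    intro m
    have := h ((1 : ℂ) ⊗ₜ[ℝ] m)
    rw [pairC_one] at this
    have hre := congrArg Complex.re this
    have him := congrArg Complex.im this
    simp at hre him
    exact ⟨hre, him⟩
  have h1 : reM _ w = 0 := npair_nondeg _ (fun m => (key m).1)
  have h2 : imM _ w = 0 := npair_nondeg _ (fun m => (key m).2)
  rw [tensor_decomp w, h1, h2]
  simp

end Aux4

/-- If a finite-dimensional real Lie algebra admits an abelian
generalized complex structure (for some closed 3-form `H`), then it is abelian. -/
theorem abelian_of_abelian_GCS
    (g : Type) [LieRing g] [LieAlgebra ℝ g] [FiniteDimensional ℝ g]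
    (H : g [⋀^Fin 3]→ₗ[ℝ] ℝ) (hH : ∀ X : Fin 4 → g, ceD H X = 0)
    (J : (g × Module.Dual ℝ g) →ₗ[ℝ] (g × Module.Dual ℝ g))
    (hJ : IsAbelianGCS H J) :
    ∀ X Y : g, ⁅X, Y⁆ = 0 := by
  obtain ⟨⟨hJ2, _hp, _hint⟩, habL⟩ := hJ
  intro X Y
  have habLbar : ∀ p ∈ eigIbar J, ∀ q ∈ eigIbar J, cxBil (courant H) p q = 0 := by
    intro p hp q hq
    have h3 := conjM_cxBil (courant H) (conjM _ p) (conjM _ q)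
    rw [conjM_conjM, conjM_conjM, habL _ (conjM_mem_eigI hp) _ (conjM_mem_eigI hq),
      map_zero] at h3
    exact h3
  have hcross : ∀ u ∈ eigI J, ∀ v ∈ eigIbar J, cxBil (courant H) u v = 0 := by
    intro u hu v hv
    apply pairC_nondeg
    intro x
    obtain ⟨p, hp, q, hq, rfl⟩ := decompEig hJ2 x
    rw [map_add]
    have e1 : pairC npBil (cxBil (courant H) u v) p = 0 := by
      have hi := cxBil_inv H u v p
      rw [habL u hu p hp, map_zero, add_zero] at hi
      exact hi
    have e2 : pairC npBil (cxBil (courant H) u v) q = 0 := by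
      have hi := cxBil_inv H v u q
      rw [habLbar v hv q hq, map_zero, add_zero] at hi
      have hneg := map_neg (pairC (npBil (V := g))) (cxBil (courant H) v u)
      rw [cxBil_antisym H u v, hneg, LinearMap.neg_apply, hi, neg_zero]
    rw [e1, e2, add_zero]
  obtain ⟨p, hp, q, hq, he⟩ :=
    decompEig hJ2 ((1 : ℂ) ⊗ₜ[ℝ] ((X, (0 : Module.Dual ℝ g)) : g × Module.Dual ℝ g))
  obtain ⟨r, hr, s, hs, hf⟩ :=
    decompEig hJ2 ((1 : ℂ) ⊗ₜ[ℝ] ((Y, (0 : Module.Dual ℝ g)) : g × Module.Dual ℝ g))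
  have hzero : (1 : ℂ) ⊗ₜ[ℝ] (courant H (X, (0 : Module.Dual ℝ g)) (Y, (0 : Module.Dual ℝ g)))
      = 0 := by
    have key : cxBil (courant H) ((1 : ℂ) ⊗ₜ[ℝ] ((X, (0 : Module.Dual ℝ g))))
        ((1 : ℂ) ⊗ₜ[ℝ] ((Y, (0 : Module.Dual ℝ g)))) =
        (1 : ℂ) ⊗ₜ[ℝ] (courant H (X, (0 : Module.Dual ℝ g)) (Y, (0 : Module.Dual ℝ g))) := by
      rw [cxBil_tmul, one_mul]
    have hqr : cxBil (courant H) q r = 0 := by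
      rw [cxBil_antisym H q r, hcross r hr q hq, neg_zero]
    rw [← key, he, hf]
    simp only [map_add, LinearMap.add_apply]
    rw [habL p hp r hr, hcross p hp s hs, habLbar q hq s hs, hqr]
    simp
  have hc := tmul_one_injective _ hzero
  have := congrArg Prod.fst hc
  simpa [courant_apply] using this


end GKTest
end
end

section
/- Let J be an abelian generalized complex structure on (g,H) with i-eigenspace L ⊂ (g ⊕ g*) ⊗ ℂ, and let π : (g ⊕ g*) ⊗ ℂ → g ⊗ ℂ be the projection onto the first factor. If v ∈ π(L) ∩ π(L̄) (where L̄ is the complex conjugate of L), then v is central in g ⊗ ℂ, i.e. [v,w] = 0 for all w ∈ g ⊗ ℂ. -/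
set_option linter.unusedSectionVars false

open scoped TensorProduct

noncomputable section

namespace GKTest

/-!
Write `v = π a = π b` with `a ∈ L` and `b ∈ L̄`. Since `J² = -1`, the complexification is
`L ⊕ L̄`, so `(w, 0) = w₁ + w₂` with `w₁ ∈ L`, `w₂ ∈ L̄`, and `w = π w₁ + π w₂`. The projection `π`
turns the Courant bracket into the Lie bracket, hence `⁅v, w⁆ = π⟦a, w₁⟧ + π⟦b, w₂⟧`. The first
term vanishes because `L` is abelian, the second because `L̄`, the complex conjugate of `L`, is
abelian as well.
-/

section Eigenspaces

open Module.End

variable {V : Type*} [AddCommGroup V] [Module ℂ V]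

theorem eigenspace_I_sup_eigenspace_neg_I {T : Module.End ℂ V} (hT : T * T = -1) :
    eigenspace T Complex.I ⊔ eigenspace T (-Complex.I) = ⊤ := by
  refine eq_top_iff.2 fun w _ => ?_
  have hTT : T (T w) = -w := by simpa using congrArg (· w) hT
  refine Submodule.mem_sup.2 ⟨(2 : ℂ)⁻¹ • (w - Complex.I • T w), ?_,
    (2 : ℂ)⁻¹ • (w + Complex.I • T w), ?_, ?_⟩
  · rw [mem_eigenspace_iff, map_smul, map_sub, map_smul, hTT, smul_comm Complex.I]
    congr 1
    rw [smul_sub, smul_smul, Complex.I_mul_I]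
    module
  · rw [mem_eigenspace_iff, map_smul, map_add, map_smul, hTT, smul_comm (-Complex.I)]
    congr 1
    rw [smul_add, smul_smul, neg_mul, Complex.I_mul_I]
    module
  · rw [← smul_add]
    module

end Eigenspaces

section Complexification

variable {M : Type} [AddCommGroup M] [Module ℝ M]

lemma cxBil_tmul_s2 (B : M →ₗ[ℝ] M →ₗ[ℝ] M) (z w : ℂ) (m n : M) :
    cxBil B (z ⊗ₜ m) (w ⊗ₜ n) = (z * w) ⊗ₜ B m n := by
  simp [cxBil, TensorProduct.AlgebraTensorModule.distribBaseChange,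
    TensorProduct.smul_tmul', mul_comm]

lemma baseChange_mul_self {J : M →ₗ[ℝ] M} (hJ : ∀ v, J (J v) = -v) :
    J.baseChange ℂ * J.baseChange ℂ = -1 := by
  rw [← LinearMap.baseChange_mul, show J * J = -1 from LinearMap.ext hJ,
    LinearMap.baseChange_neg, LinearMap.baseChange_one]

lemma eigI_sup_eigIbar {J : M →ₗ[ℝ] M} (hJ : ∀ v, J (J v) = -v) :
    eigI J ⊔ eigIbar J = ⊤ :=
  eigenspace_I_sup_eigenspace_neg_I (baseChange_mul_self hJ)

def cxConj : ℂ ⊗[ℝ] M →ₗ[ℝ] ℂ ⊗[ℝ] M :=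
  Complex.conjAe.toLinearMap.rTensor M

@[simp] lemma cxConj_tmul (z : ℂ) (m : M) : cxConj (z ⊗ₜ m) = (starRingEnd ℂ z) ⊗ₜ m := rfl

lemma cxConj_cxConj (x : ℂ ⊗[ℝ] M) : cxConj (cxConj x) = x := by
  induction x using TensorProduct.induction_on with
  | zero => simp
  | tmul z m => simp
  | add a b ha hb => simp [ha, hb]

lemma cxConj_smul (c : ℂ) (x : ℂ ⊗[ℝ] M) : cxConj (c • x) = starRingEnd ℂ c • cxConj x := by
  induction x using TensorProduct.induction_on with
  | zero => simp
  | tmul z m => simp [TensorProduct.smul_tmul']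
  | add a b ha hb => simp [ha, hb]

lemma cxConj_baseChange (J : M →ₗ[ℝ] M) (x : ℂ ⊗[ℝ] M) :
    cxConj (J.baseChange ℂ x) = J.baseChange ℂ (cxConj x) := by
  induction x using TensorProduct.induction_on with
  | zero => simp
  | tmul z m => simp
  | add a b ha hb => simp [ha, hb]

lemma cxConj_cxBil (B : M →ₗ[ℝ] M →ₗ[ℝ] M) (x y : ℂ ⊗[ℝ] M) :
    cxConj (cxBil B x y) = cxBil B (cxConj x) (cxConj y) := by
  induction x using TensorProduct.induction_on with
  | zero => simp
  | add a b ha hb => simp [ha, hb]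
  | tmul z m =>
    induction y using TensorProduct.induction_on with
    | zero => simp
    | tmul w n => simp [cxBil_tmul_s2]
    | add a b ha hb => simp [ha, hb]

lemma cxConj_mem_eigI_of_mem_eigIbar {J : M →ₗ[ℝ] M} {x : ℂ ⊗[ℝ] M} (hx : x ∈ eigIbar J) :
    cxConj x ∈ eigI J := by
  rw [eigIbar, Module.End.mem_eigenspace_iff] at hx
  rw [eigI, Module.End.mem_eigenspace_iff, ← cxConj_baseChange, hx, cxConj_smul]
  simp

lemma cxBil_eq_zero_of_mem_eigIbar {B : M →ₗ[ℝ] M →ₗ[ℝ] M} {J : M →ₗ[ℝ] M}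
    (hB : ∀ u ∈ eigI J, ∀ v ∈ eigI J, cxBil B u v = 0) {x y : ℂ ⊗[ℝ] M}
    (hx : x ∈ eigIbar J) (hy : y ∈ eigIbar J) : cxBil B x y = 0 := by
  rw [← cxConj_cxConj (cxBil B x y), cxConj_cxBil,
    hB _ (cxConj_mem_eigI_of_mem_eigIbar hx) _ (cxConj_mem_eigI_of_mem_eigIbar hy), map_zero]

end Complexification

section Projection

variable {g : Type} [LieRing g] [LieAlgebra ℝ g]

lemma baseChange_fst_cxBil_courant (H : g [⋀^Fin 3]→ₗ[ℝ] ℝ) (a b : ℂ ⊗[ℝ] (g × Module.Dual ℝ g)) :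
    (LinearMap.fst ℝ g (Module.Dual ℝ g)).baseChange ℂ (cxBil (courant H) a b) =
      ⁅(LinearMap.fst ℝ g (Module.Dual ℝ g)).baseChange ℂ a,
        (LinearMap.fst ℝ g (Module.Dual ℝ g)).baseChange ℂ b⁆ := by
  induction a using TensorProduct.induction_on with
  | zero => simp
  | add a a' ha ha' => simp only [map_add, LinearMap.add_apply, ha, ha', add_lie]
  | tmul z p =>
    induction b using TensorProduct.induction_on with
    | zero => simp
    | add b b' hb hb' => simp only [map_add, hb, hb', lie_add]
    | tmul w q => simp [cxBil_tmul_s2, LieAlgebra.ExtendScalars.bracket_tmul]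

lemma baseChange_fst_inl (w : ℂ ⊗[ℝ] g) :
    (LinearMap.fst ℝ g (Module.Dual ℝ g)).baseChange ℂ
      ((LinearMap.inl ℝ g (Module.Dual ℝ g)).baseChange ℂ w) = w := by
  rw [← LinearMap.comp_apply, ← LinearMap.baseChange_comp, LinearMap.fst_comp_inl,
    LinearMap.baseChange_id, LinearMap.id_apply]

lemma lie_baseChange_fst_eq_zero (H : g [⋀^Fin 3]→ₗ[ℝ] ℝ)
    {S : Submodule ℂ (ℂ ⊗[ℝ] (g × Module.Dual ℝ g))}
    (hS : ∀ u ∈ S, ∀ v ∈ S, cxBil (courant H) u v = 0) {a b : ℂ ⊗[ℝ] (g × Module.Dual ℝ g)}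
    (ha : a ∈ S) (hb : b ∈ S) :
    ⁅(LinearMap.fst ℝ g (Module.Dual ℝ g)).baseChange ℂ a,
      (LinearMap.fst ℝ g (Module.Dual ℝ g)).baseChange ℂ b⁆ = 0 := by
  rw [← baseChange_fst_cxBil_courant, hS a ha b hb, map_zero]

end Projection

theorem central_of_mem_pi_L_inter_pi_Lbar_general
    (g : Type) [LieRing g] [LieAlgebra ℝ g]
    (H : g [⋀^Fin 3]→ₗ[ℝ] ℝ)
    (J : (g × Module.Dual ℝ g) →ₗ[ℝ] (g × Module.Dual ℝ g))
    (hJ : IsAbelianGCS H J)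
    (v : ℂ ⊗[ℝ] g)
    (hv : v ∈ Submodule.map ((LinearMap.fst ℝ g (Module.Dual ℝ g)).baseChange ℂ) (eigI J) ⊓
            Submodule.map ((LinearMap.fst ℝ g (Module.Dual ℝ g)).baseChange ℂ) (eigIbar J)) :
    ∀ w : ℂ ⊗[ℝ] g, ⁅v, w⁆ = 0 := by
  set π := (LinearMap.fst ℝ g (Module.Dual ℝ g)).baseChange ℂ
  obtain ⟨⟨a, ha, rfl⟩, b, hb, hba⟩ := hv
  intro w
  obtain ⟨w₁, hw₁, w₂, hw₂, hw⟩ := Submodule.mem_sup.1 <| (eigI_sup_eigIbar hJ.1.1).ge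
    (Submodule.mem_top (x := (LinearMap.inl ℝ g (Module.Dual ℝ g)).baseChange ℂ w))
  have hLbar_abelian : ∀ x ∈ eigIbar J, ∀ y ∈ eigIbar J, cxBil (courant H) x y = 0 :=
    fun _ hx _ hy => cxBil_eq_zero_of_mem_eigIbar hJ.2 hx hy
  calc ⁅π a, w⁆ = ⁅π a, π w₁⁆ + ⁅π b, π w₂⁆ := by
        rw [← baseChange_fst_inl w, ← hw, map_add, hba]
        exact lie_add _ _ _
    _ = 0 := by
      rw [lie_baseChange_fst_eq_zero H hJ.2 ha hw₁, lie_baseChange_fst_eq_zero H hLbar_abelian hb hw₂,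
        add_zero]

/-- If `J` is an abelian generalized complex structure on `(g,H)` with
`i`-eigenspace `L`, and `v` lies in `π(L) ∩ π(L̄)` (where `π` is the projection of
`(g ⊕ g*) ⊗ ℂ` onto `g ⊗ ℂ` and `L̄`, the conjugate of `L`, is the `(−i)`-eigenspace),
then `v` is central in `g ⊗ ℂ`. -/
theorem central_of_mem_pi_L_inter_pi_Lbar
    (g : Type) [LieRing g] [LieAlgebra ℝ g] [FiniteDimensional ℝ g]
    (H : g [⋀^Fin 3]→ₗ[ℝ] ℝ) (hH : ∀ X : Fin 4 → g, ceD H X = 0)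
    (J : (g × Module.Dual ℝ g) →ₗ[ℝ] (g × Module.Dual ℝ g))
    (hJ : IsAbelianGCS H J)
    (v : ℂ ⊗[ℝ] g)
    (hv : v ∈ Submodule.map ((LinearMap.fst ℝ g (Module.Dual ℝ g)).baseChange ℂ) (eigI J) ⊓
            Submodule.map ((LinearMap.fst ℝ g (Module.Dual ℝ g)).baseChange ℂ) (eigIbar J)) :
    ∀ w : ℂ ⊗[ℝ] g, ⁅v, w⁆ = 0 :=
  central_of_mem_pi_L_inter_pi_Lbar_general g H J hJ v hv

end GKTest
end
end

section
/- Let g be a finite-dimensional real Lie algebra and H an alternating 3-form on g with dH = 0 (for the Chevalley–Eilenberg differential). Then the Courant bracket ⟦(X,ξ),(Y,η)⟧ = ([X,Y], ad*_X η − ad*_Y ξ + H(X,Y,·)) is antisymmetric and satisfies the Jacobi identity; that is, it makes g ⊕ g* into a Lie algebra. -/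
/-! The first component of the bracket is the Lie bracket of `g`, so it is antisymmetric and
satisfies Jacobi. In the second component of the Jacobiator of `(X,ξ), (Y,η), (W,ζ)`, evaluated
at `Z`, the terms in `ξ, η, ζ` cancel by the Jacobi identity of `g` (the coadjoint action is a
representation), while the six terms in `H`, rearranged with the antisymmetry of `H`, add up
to `-dH(X, Y, W, Z) = 0`. -/

set_option linter.unusedSectionVars false

open scoped TensorProduct

noncomputable section

namespace AlternatingMap

variable {R M N : Type*} [CommRing R] [AddCommGroup M] [Module R M] [AddCommGroup N] [Module R N]
  (f : M [⋀^Fin 3]→ₗ[R] N) (x y z : M)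

lemma map_vecCons_swap : f ![y, x, z] = -f ![x, y, z] := by
  rw [← f.map_swap ![x, y, z] (show (0 : Fin 3) ≠ 1 by decide)]
  congr 1; funext l; fin_cases l <;> rfl

lemma map_vecCons_rotate : f ![z, x, y] = f ![x, y, z] := by
  have : ![x, z, y] = ![x, y, z] ∘ Equiv.swap 1 2 := by funext l; fin_cases l <;> rfl
  rw [map_vecCons_swap f x z y, this, f.map_swap _ (by decide), neg_neg]

lemma map_vecCons_neg : f ![-x, y, z] = -f ![x, y, z] := by
  convert f.map_update_neg ![x, y, z] 0 x using 3 <;> funext l <;> fin_cases l <;> rfl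

end AlternatingMap

lemma lie_lie_add_lie_lie_add_lie_lie {L : Type*} [LieRing L] (x y z : L) :
    ⁅⁅x, y⁆, z⁆ + ⁅⁅y, z⁆, x⁆ + ⁅⁅z, x⁆, y⁆ = 0 := by
  calc ⁅⁅x, y⁆, z⁆ + ⁅⁅y, z⁆, x⁆ + ⁅⁅z, x⁆, y⁆ = -(⁅x, ⁅y, z⁆⁆ + ⁅y, ⁅z, x⁆⁆ + ⁅z, ⁅x, y⁆⁆) := by
        rw [← lie_skew ⁅x, y⁆ z, ← lie_skew ⁅y, z⁆ x, ← lie_skew ⁅z, x⁆ y]; abel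
    _ = 0 := by rw [lie_jacobi, neg_zero]

namespace GKTest

section

variable {g : Type} [LieRing g] [LieAlgebra ℝ g] (H : g [⋀^Fin 3]→ₗ[ℝ] ℝ)

lemma ceD_three (X : Fin 4 → g) :
    ceD H X = -H ![⁅X 0, X 1⁆, X 2, X 3] + H ![⁅X 0, X 2⁆, X 1, X 3]
      - H ![⁅X 0, X 3⁆, X 1, X 2] - H ![⁅X 1, X 2⁆, X 0, X 3]
      + H ![⁅X 1, X 3⁆, X 0, X 2] - H ![⁅X 2, X 3⁆, X 0, X 1] := by
  obtain ⟨h01, h02, h03, h12, h13, h23⟩ :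
      ceArg X 0 1 = ![⁅X 0, X 1⁆, X 2, X 3] ∧ ceArg X 0 2 = ![⁅X 0, X 2⁆, X 1, X 3] ∧
      ceArg X 0 3 = ![⁅X 0, X 3⁆, X 1, X 2] ∧ ceArg X 1 2 = ![⁅X 1, X 2⁆, X 0, X 3] ∧
      ceArg X 1 3 = ![⁅X 1, X 3⁆, X 0, X 2] ∧ ceArg X 2 3 = ![⁅X 2, X 3⁆, X 0, X 1] := by
    refine ⟨?_, ?_, ?_, ?_, ?_, ?_⟩ <;> funext l <;> fin_cases l <;> rfl
  simp [ceD, Fin.sum_univ_succ, pow_succ, h01, h02, h03, h12, h13, h23, sub_eq_add_neg, add_assoc]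

lemma cyclic_sum_eq_zero_of_ceD_eq_zero (hH : ∀ X : Fin 4 → g, ceD H X = 0) (a b c z : g) :
    H ![⁅a, b⁆, c, z] + H ![⁅b, c⁆, a, z] + H ![⁅c, a⁆, b, z]
      + H ![a, b, ⁅c, z⁆] + H ![b, c, ⁅a, z⁆] + H ![c, a, ⁅b, z⁆] = 0 := by
  have h := ceD_three H ![a, b, c, z]
  simp only [hH, Fin.isValue, Matrix.cons_val_zero, Matrix.cons_val_one, Matrix.cons_val] at h
  have e1 : H ![⁅a, c⁆, b, z] = -H ![⁅c, a⁆, b, z] := by rw [← lie_skew a c, H.map_vecCons_neg]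
  have e2 := H.map_vecCons_rotate b c ⁅a, z⁆
  have e3 : H ![⁅b, z⁆, a, c] = -H ![c, a, ⁅b, z⁆] := by
    rw [H.map_vecCons_rotate a c, H.map_vecCons_swap c a]
  have e4 := H.map_vecCons_rotate a b ⁅c, z⁆
  linarith

lemma courant_swap (a b : g × Module.Dual ℝ g) : courant H a b = -courant H b a := by
  refine Prod.ext (lie_skew a.1 b.1).symm ?_
  ext Z
  simp only [courant_apply, courantDual_apply, Prod.snd_neg, LinearMap.neg_apply,
    H.map_vecCons_swap a.1 b.1 Z]
  ring

lemma courant_jacobi (hH : ∀ X : Fin 4 → g, ceD H X = 0) (a b c : g × Module.Dual ℝ g) :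
    courant H (courant H a b) c + courant H (courant H b c) a +
      courant H (courant H c a) b = 0 := by
  refine Prod.ext (lie_lie_add_lie_lie_add_lie_lie a.1 b.1 c.1) ?_
  ext Z
  have dual_jacobi (ξ : Module.Dual ℝ g) (x y : g) :
      ξ ⁅⁅x, y⁆, Z⁆ = ξ ⁅x, ⁅y, Z⁆⁆ - ξ ⁅y, ⁅x, Z⁆⁆ := by
    rw [lie_lie, map_sub]
  simp only [courant_apply, courantDual_apply, Prod.snd_add, LinearMap.add_apply, Prod.snd_zero,
    LinearMap.zero_apply, dual_jacobi a.2, dual_jacobi b.2, dual_jacobi c.2]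
  linarith [cyclic_sum_eq_zero_of_ceD_eq_zero H hH a.1 b.1 c.1 Z]

end

theorem courant_isLieBracket_general
    (g : Type) [LieRing g] [LieAlgebra ℝ g]
    (H : g [⋀^Fin 3]→ₗ[ℝ] ℝ) (hH : ∀ X : Fin 4 → g, ceD H X = 0) :
    (∀ a b : g × Module.Dual ℝ g, courant H a b = -courant H b a) ∧
    (∀ a b c : g × Module.Dual ℝ g,
      courant H (courant H a b) c + courant H (courant H b c) a +
        courant H (courant H c a) b = 0) :=
  ⟨courant_swap H, courant_jacobi H hH⟩

/-- For a closed 3-form `H` on a finite-dimensional real Lie algebra `g`,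
the Courant bracket is antisymmetric and satisfies the Jacobi identity, i.e. it makes
`g ⊕ g*` into a Lie algebra (it is `ℝ`-bilinear by construction, being bundled as a
bilinear map). -/
theorem courant_isLieBracket
    (g : Type) [LieRing g] [LieAlgebra ℝ g] [FiniteDimensional ℝ g]
    (H : g [⋀^Fin 3]→ₗ[ℝ] ℝ) (hH : ∀ X : Fin 4 → g, ceD H X = 0) :
    (∀ a b : g × Module.Dual ℝ g, courant H a b = -courant H b a) ∧
    (∀ a b c : g × Module.Dual ℝ g,
      courant H (courant H a b) c + courant H (courant H b c) a +
        courant H (courant H c a) b = 0) :=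
  courant_isLieBracket_general g H hH

end GKTest
end
end

section
/- Let g be an n-dimensional nilpotent real Lie algebra. Then the Chevalley–Eilenberg differential vanishes on alternating (n−1)-forms: dβ = 0 for every alternating (n−1)-form β on g. In particular, no nonzero alternating n-form on g is Chevalley–Eilenberg exact, so the top cohomology Hⁿ(g) is nonzero. -/
/-!
The Chevalley–Eilenberg differential of an alternating form `β` is, up to the factor `-1/2`, the
double alternatization of `(x, y) ↦ β(⁅x, y⁆, ·)`, so it is itself alternating; in top degree it
is therefore determined by its value on a single basis. A nilpotent Lie algebra has a basis adapted
to its lower central series, in which every `ad x` has zero diagonal. Then `⁅e p, e q⁆` lies in the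
span of the `e t` with `t ≠ p, q`, so each term `β(⁅e p, e q⁆, e 0, …, ê p, …, ê q, …)` of `dβ(e)`
has linearly dependent arguments and vanishes. The determinant form of a basis is then a cocycle
(there are no nonzero forms above the top degree) that is not a coboundary.
-/

set_option linter.unusedSectionVars false

open scoped TensorProduct

noncomputable section

namespace GKTest

/-- `ω ∈ Λ²S`: the 2-form `ω` is a finite sum of wedges of 1-forms belonging to `S`. -/
def inLambdaTwo {g : Type} [LieRing g] [LieAlgebra ℝ g]
    (S : Set (Module.Dual ℝ g)) (ω : g → g → ℝ) : Prop :=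
  ∃ (m : ℕ) (a b : Fin m → Module.Dual ℝ g),
    (∀ l, a l ∈ S) ∧ (∀ l, b l ∈ S) ∧
    ∀ X Y, ω X Y = ∑ l, (a l X * b l Y - a l Y * b l X)

/-- The filtration of `g*` given by `g*₀ = {0}`, `g*ᵢ₊₁ = {v : dv ∈ Λ² g*ᵢ}`;
in particular `g*₁ = ker d`. Here `dv` is the 2-form `(X,Y) ↦ −v(⁅X,Y⁆)`. -/
def ceFilt (g : Type) [LieRing g] [LieAlgebra ℝ g] : ℕ → Set (Module.Dual ℝ g)
  | 0 => {0}
  | (i + 1) => {v | inLambdaTwo (ceFilt g i) fun X Y => -(v ⁅X, Y⁆)}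

end GKTest

open Module Submodule AlternatingMap

theorem Fin.compl_pair_subset_range_succAbove_succAbove {n : ℕ} {i j : Fin (n + 1)}
    (hij : i ≤ j) :
    ({i.castSucc, j.succ}ᶜ : Set (Fin (n + 2))) ⊆
      Set.range fun l => i.castSucc.succAbove (j.succAbove l) := by
  intro t ht
  simp only [Set.mem_compl_iff, Set.mem_insert_iff, Set.mem_singleton_iff, not_or] at ht
  obtain ⟨m, rfl⟩ := Fin.exists_succAbove_eq ht.1
  have hmj : m ≠ j := by
    rintro rfl
    exact ht.2 (Fin.succAbove_of_le_castSucc _ _ (Fin.castSucc_le_castSucc_iff.mpr hij))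
  obtain ⟨l, rfl⟩ := Fin.exists_succAbove_eq hmj
  exact ⟨l, rfl⟩

theorem AlternatingMap.map_vecCons_eq_zero_of_mem_span {K M N : Type*} [Field K]
    [AddCommGroup M] [Module K M] [AddCommGroup N] [Module K N] {n : ℕ}
    (f : M [⋀^Fin (n + 1)]→ₗ[K] N) {x : M} {w : Fin n → M}
    (hx : x ∈ span K (Set.range w)) : f (Matrix.vecCons x w) = 0 :=
  f.map_linearDependent _ fun h => ((linearIndependent_finCons.mp h).2 hx)

theorem exists_linearIndepOn_forall_le_span_inter {K V : Type*} [DivisionRing K]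
    [AddCommGroup V] [Module K V] {C : ℕ → Submodule K V} (hC : Antitone C) {r : ℕ}
    (hr : C r = ⊥) :
    ∃ s ⊆ (C 0 : Set V), LinearIndepOn K id s ∧ ∀ j, C j ≤ span K (s ∩ C j) := by
  induction r generalizing C with
  | zero =>
    refine ⟨∅, by simp, linearIndepOn_empty K id, fun j => ?_⟩
    simp [eq_bot_iff.mpr ((hC (Nat.zero_le j)).trans hr.le)]
  | succ r ih =>
    obtain ⟨s, hs1, hsli, hsC⟩ := ih (C := fun j => C (j + 1)) (fun i j h => hC (by omega)) hr
    obtain ⟨b, hb0, hsb, h0b, hbli⟩ :=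
      exists_linearIndepOn_id_extension hsli (hs1.trans (hC (Nat.zero_le 1)))
    refine ⟨b, hb0, hbli, fun j => ?_⟩
    cases j with
    | zero => rw [Set.inter_eq_self_of_subset_left hb0]; exact fun x hx => h0b hx
    | succ j => exact (hsC j).trans (span_mono (Set.inter_subset_inter_left _ hsb))

theorem LieModule.exists_basis_repr_lie_self_eq_zero (K L M : Type*) [Field K] [LieRing L]
    [LieAlgebra K L] [AddCommGroup M] [Module K M] [LieRingModule L M] [LieModule K L M]
    [LieModule.IsNilpotent L M] :
    ∃ (s : Set M) (e : Basis s K M), ∀ (x : L) (p : s), e.repr ⁅x, e p⁆ p = 0 := by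
  set C : ℕ → Submodule K M := fun j => (LieModule.lowerCentralSeries K L M j).toSubmodule
  obtain ⟨r, hr⟩ := LieModule.IsNilpotent.nilpotent K L M
  obtain ⟨s, -, hli, hC⟩ := exists_linearIndepOn_forall_le_span_inter (C := C)
    (fun i j h => (LieModule.antitone_lowerCentralSeries K L M h : _)) (r := r) (by simp [C, hr])
  have hspan : ⊤ ≤ span K (Set.range ((↑) : s → M)) := by
    simpa [C] using (hC 0).trans (span_mono Set.inter_subset_left)
  set e := Basis.mk hli hspan
  have he : ⇑e = Subtype.val := Basis.coe_mk hli hspan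
  refine ⟨s, e, fun x p => ?_⟩
  obtain ⟨j, hpj, hpj'⟩ : ∃ j, (p : M) ∈ C j ∧ (p : M) ∉ C (j + 1) := by
    by_contra! h
    have hpr : (p : M) ∈ C r := Nat.rec (motive := fun j => (p : M) ∈ C j) (by simp [C]) h r
    exact hli.ne_zero p.2 (by simpa [C, hr] using hpr)
  have hlie : ⁅x, (p : M)⁆ ∈ LieModule.lowerCentralSeries K L M (j + 1) := by
    rw [LieModule.lowerCentralSeries_succ]
    exact LieSubmodule.lie_mem_lie (LieSubmodule.mem_top x) hpj
  have hmem := hC (j + 1) hlie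
  rw [← Subtype.image_preimage_coe, ← he, Basis.mem_span_image] at hmem
  rw [← Finsupp.notMem_support_iff]
  exact fun hp => hpj' (by simpa [he] using hmem hp)

theorem Module.Basis.lie_mem_span_image_compl_pair {K L ι : Type*} [Field K] [LieRing L]
    [LieAlgebra K L] (e : Basis ι K L) (he : ∀ (x : L) (p : ι), e.repr ⁅x, e p⁆ p = 0)
    (p q : ι) : ⁅e p, e q⁆ ∈ span K (e '' {p, q}ᶜ) := by
  rw [Basis.mem_span_image]
  intro t ht
  have hp : e.repr ⁅e p, e q⁆ p = 0 := by
    rw [← lie_skew, map_neg, Finsupp.neg_apply, he, neg_zero]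
  simp only [Set.mem_compl_iff, Set.mem_insert_iff, Set.mem_singleton_iff, not_or]
  exact ⟨by rintro rfl; exact Finsupp.mem_support_iff.mp ht hp,
    by rintro rfl; exact Finsupp.mem_support_iff.mp ht (he _ _)⟩

namespace GKTest

variable {g : Type} [LieRing g] [LieAlgebra ℝ g]

theorem ceArg_castSucc_succ {k : ℕ} (X : Fin (k + 2) → g) {i j : Fin (k + 1)} (hij : i ≤ j) :
    ceArg X i.castSucc j.succ =
      Matrix.vecCons ⁅X i.castSucc, X j.succ⁆ (j.removeNth (i.castSucc.removeNth X)) := by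
  funext l
  cases l using Fin.cases with
  | zero => rfl
  | succ l =>
    simp only [ceArg, Fin.val_succ, Nat.add_one_ne_zero, dite_false, Matrix.cons_val_succ,
      Fin.removeNth_apply]
    congr 1
    rw [Fin.le_def] at hij
    ext
    simp only [skip2, Fin.val_castSucc, Nat.add_sub_cancel, Fin.succAbove, Fin.lt_def]
    split_ifs <;> simp_all <;> omega

-- A pair `I < J` in `Fin (k + 2)` is written `(i.castSucc, j.succ)` with `i ≤ j`, the encoding
-- of `alternatizeUncurryFin_alternatizeUncurryFinLM_comp_apply`; it shifts the sign by one.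
theorem ceD_eq_sum_pairs {k : ℕ} (β : g [⋀^Fin (k + 1)]→ₗ[ℝ] ℝ) (X : Fin (k + 2) → g) :
    ceD β X = -∑ i : Fin (k + 1), ∑ j ∈ Finset.Ici i, (-1 : ℝ) ^ (i + j : ℕ) *
      β (Matrix.vecCons ⁅X i.castSucc, X j.succ⁆ (j.removeNth (i.castSucc.removeNth X))) := by
  have hlast (J : Fin (k + 2)) : ¬ (k + 1 < (J : ℕ)) := by have := J.isLt; omega
  rw [ceD, Fin.sum_univ_castSucc]
  simp only [Fin.val_last, hlast, if_false, Finset.sum_const_zero, add_zero,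
    ← Finset.sum_neg_distrib]
  refine Finset.sum_congr rfl fun i _ => ?_
  rw [Fin.sum_univ_succ, ← Finset.filter_le_eq_Ici, Finset.sum_filter]
  simp only [Fin.val_castSucc, Fin.val_zero, Nat.not_lt_zero, if_false, zero_add, Fin.val_succ,
    Nat.lt_succ_iff, ← Fin.le_def]
  refine Finset.sum_congr rfl fun j _ => ?_
  split_ifs with hij
  · rw [ceArg_castSucc_succ X hij, ← add_assoc, pow_succ]
    ring
  · simp

theorem ceD_fin_zero (β : g [⋀^Fin 0]→ₗ[ℝ] ℝ) (X : Fin 1 → g) : ceD β X = 0 := by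
  simp [ceD]

-- The double alternatization contains each pair `i < j` once for each order of the bracket, and
-- with the sign `(-1) ^ (i + j - 1)`; hence the factor `-1/2`.
def ceDAlternating : {k : ℕ} → (g [⋀^Fin k]→ₗ[ℝ] ℝ) → g [⋀^Fin (k + 1)]→ₗ[ℝ] ℝ
  | 0, _ => 0
  | _ + 1, β => (-2⁻¹ : ℝ) • alternatizeUncurryFin
      (alternatizeUncurryFinLM ∘ₗ (LieAlgebra.ad ℝ g : g →ₗ[ℝ] Module.End ℝ g).compr₂ β.curryLeft)

theorem ceDAlternating_apply {k : ℕ} (β : g [⋀^Fin k]→ₗ[ℝ] ℝ) (X : Fin (k + 1) → g) :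
    ceDAlternating β X = ceD β X := by
  cases k with
  | zero => rw [ceD_fin_zero]; rfl
  | succ k =>
    rw [ceD_eq_sum_pairs, ceDAlternating, AlternatingMap.smul_apply,
      alternatizeUncurryFin_alternatizeUncurryFinLM_comp_apply, Finset.smul_sum,
      ← Finset.sum_neg_distrib]
    refine Finset.sum_congr rfl fun i _ => ?_
    rw [Finset.smul_sum, ← Finset.sum_neg_distrib]
    refine Finset.sum_congr rfl fun j _ => ?_
    simp only [LinearMap.compr₂_apply, LieHom.coe_toLinearMap, LieAlgebra.ad_apply,
      ← lie_skew (X j.succ), map_neg, AlternatingMap.neg_apply, curryLeft_apply_apply]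
    simp only [zsmul_eq_mul, smul_eq_mul, Int.cast_pow, Int.cast_neg, Int.cast_one]
    ring

theorem ceD_basis_eq_zero_of_lie_mem_span {k : ℕ} (e : Basis (Fin (k + 2)) ℝ g)
    (he : ∀ p q, ⁅e p, e q⁆ ∈ span ℝ (e '' {p, q}ᶜ)) (β : g [⋀^Fin (k + 1)]→ₗ[ℝ] ℝ) :
    ceD β e = 0 := by
  rw [ceD_eq_sum_pairs, neg_eq_zero]
  refine Finset.sum_eq_zero fun i _ => Finset.sum_eq_zero fun j hj => ?_
  have hrange :
      ⇑e '' {i.castSucc, j.succ}ᶜ ⊆ Set.range (j.removeNth (i.castSucc.removeNth e)) := by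
    rintro _ ⟨t, ht, rfl⟩
    obtain ⟨l, rfl⟩ := Fin.compl_pair_subset_range_succAbove_succAbove (Finset.mem_Ici.mp hj) ht
    exact ⟨l, rfl⟩
  rw [β.map_vecCons_eq_zero_of_mem_span (span_mono hrange (he _ _)), mul_zero]

variable [FiniteDimensional ℝ g]

theorem ceD_eq_zero_of_finrank_lt {k : ℕ} (hk : finrank ℝ g < k + 1)
    (β : g [⋀^Fin k]→ₗ[ℝ] ℝ) (X : Fin (k + 1) → g) : ceD β X = 0 := by
  rw [← ceDAlternating_apply]
  refine (ceDAlternating β).map_linearDependent X fun hX => ?_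
  simpa using hk.trans_le' hX.fintype_card_le_finrank

theorem ceD_eq_zero_of_finrank_eq [LieRing.IsNilpotent g] {k : ℕ} (hk : finrank ℝ g = k + 1)
    (β : g [⋀^Fin k]→ₗ[ℝ] ℝ) (X : Fin (k + 1) → g) : ceD β X = 0 := by
  obtain ⟨s, e, he⟩ := LieModule.exists_basis_repr_lie_self_eq_zero ℝ g g
  set e' := e.reindex (e.indexEquiv (finBasisOfFinrankEq ℝ g hk))
  have he' (x : g) (p : Fin (k + 1)) : e'.repr ⁅x, e' p⁆ p = 0 := by simp [e', he]
  suffices ceDAlternating β e' = 0 by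
    rw [← ceDAlternating_apply, (ceDAlternating β).eq_smul_basis_det e', this, zero_smul,
      AlternatingMap.zero_apply]
  rw [ceDAlternating_apply]
  cases k with
  | zero => exact ceD_fin_zero β e'
  | succ k => exact ceD_basis_eq_zero_of_lie_mem_span e' (e'.lie_mem_span_image_compl_pair he') β

/-- On an `n`-dimensional nilpotent real Lie algebra the
Chevalley–Eilenberg differential vanishes on all alternating `(n−1)`-forms; in
particular no nonzero `n`-form is exact, and (for `n ≥ 1`) the top cohomology is
nonzero. -/
theorem ceD_vanishes_in_degree_top_minus_one
    (g : Type) [LieRing g] [LieAlgebra ℝ g] [FiniteDimensional ℝ g]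
    [LieRing.IsNilpotent g]
    (n : ℕ) (hn : Module.finrank ℝ g = n) :
    (∀ (β : g [⋀^Fin (n - 1)]→ₗ[ℝ] ℝ) (X : Fin (n - 1 + 1) → g), ceD β X = 0) ∧
    (∀ γ : g [⋀^Fin (n - 1 + 1)]→ₗ[ℝ] ℝ,
      (∃ β : g [⋀^Fin (n - 1)]→ₗ[ℝ] ℝ, ∀ X : Fin (n - 1 + 1) → g, γ X = ceD β X) →
      γ = 0) ∧
    (0 < n → ∃ γ : g [⋀^Fin (n - 1 + 1)]→ₗ[ℝ] ℝ, γ ≠ 0 ∧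
      (∀ X : Fin (n - 1 + 1 + 1) → g, ceD γ X = 0) ∧
      ∀ β : g [⋀^Fin (n - 1)]→ₗ[ℝ] ℝ, ∃ X : Fin (n - 1 + 1) → g, γ X ≠ ceD β X) := by
  have hd : ∀ (β : g [⋀^Fin (n - 1)]→ₗ[ℝ] ℝ) X, ceD β X = 0 := by
    rcases Nat.eq_zero_or_pos n with rfl | hpos
    · exact ceD_eq_zero_of_finrank_lt (by omega)
    · exact ceD_eq_zero_of_finrank_eq (by omega)
  refine ⟨hd, fun γ ⟨β, hγ⟩ => ?_, fun hpos => ?_⟩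
  · ext X
    rw [hγ, hd, AlternatingMap.zero_apply]
  · let e := finBasisOfFinrankEq ℝ g (show finrank ℝ g = n - 1 + 1 by omega)
    refine ⟨e.det, e.det_ne_zero, fun X => ceD_eq_zero_of_finrank_lt (by omega) _ X,
      fun β => ⟨e, ?_⟩⟩
    rw [hd, e.det_self]
    exact one_ne_zero

end GKTest
end
end
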